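/- arXiv:1412.5428 — 3 statements merged into one kernel-verified Lean document; each statement's English description precedes it below -/
import Mathlib

section
/- Every w ∈ W^Γ can be written as w = w_{J_1} ⋯ w_{J_r} with J_1, …, J_r ∈ S̄ and l(w) = l(w_{J_1}) + … + l(w_{J_r}). Moreover, if s ∈ S is such that l(sw) < l(w), then such a factorization can be chosen with s ∈ J_1. -/
open CoxeterSystem

/-- The subgroup of fixed points of a group `Γ` of automorphisms of `W`. -/
def fixedSubgroup {W : Type*} [Group W] (Γ : Subgroup (MulAut W)) : Subgroup W where
  carrier := {w | ∀ γ ∈ Γ, γ w = w}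
  one_mem' := fun γ _ => map_one γ
  mul_mem' := fun {a b} ha hb γ hγ => by rw [map_mul, ha γ hγ, hb γ hγ]
  inv_mem' := fun {a} ha γ hγ => by rw [map_inv, ha γ hγ]

/-- `I` is a `Γ`-orbit on the set `S` of simple reflections of `(W, S)` such that the
standard parabolic subgroup `W_I` generated by `I` is finite. -/
def IsFinParabolicOrbit {B W : Type*} [Group W] {M : CoxeterMatrix B}
    (cs : CoxeterSystem M W) (Γ : Subgroup (MulAut W)) (I : Set W) : Prop :=
  (∃ s ∈ Set.range cs.simple, I = {t | ∃ γ ∈ Γ, γ s = t}) ∧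
    Finite ↥(Subgroup.closure I)

/-- `w` is the longest element of the standard parabolic subgroup `W_I` generated by `I`. -/
def IsLongestIn {B W : Type*} [Group W] {M : CoxeterMatrix B}
    (cs : CoxeterSystem M W) (I : Set W) (w : W) : Prop :=
  w ∈ Subgroup.closure I ∧ ∀ u ∈ Subgroup.closure I, cs.length u ≤ cs.length w

/-!
Tits' argument: `s i ↦ ((t, ε) ↦ (s i * t * s i, ε + [t = s i]))` respects the braid relations,
so `W` acts on `W × ZMod 2`, and the parity of the number of occurrences of `t` in the inversion
sequence of a word depends only on its product. As `s i` occurs exactly once in the left inversion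
sequence of a reduced word starting with `i`, this gives the exchange property for left descents.
Consequently, if every element of `I ⊆ S` is a left descent of `w`, every `u ∈ W_I` is a prefix of
`w`: `ℓ u + ℓ (u⁻¹ * w) = ℓ w`.

For `w ∈ W^Γ` with left descent `s`, `Γ` preserves `S`, hence `ℓ`, so the whole `Γ`-orbit `I` of
`s` consists of left descents of `w`. Thus `W_I` has bounded length, so it is finite; its longest
element `w_I` is unique, hence `Γ`-fixed, and it is a prefix of `w`. Now `w_I⁻¹ * w ∈ W^Γ` is
shorter than `w`, and we recurse.
-/

theorem mul_mul_inv_eq_iff {G : Type*} [Group G] {a t u : G} :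
    a * t * a⁻¹ = u ↔ t = a⁻¹ * u * a := by
  constructor <;> rintro rfl <;> group

namespace CoxeterSystem

open scoped Classical

variable {B W : Type*} [Group W] {M : CoxeterMatrix B} (cs : CoxeterSystem M W)

local prefix:100 "s" => cs.simple
local prefix:100 "π" => cs.wordProd
local prefix:100 "ℓ" => cs.length

theorem simple_mul_mul_simple_eq_simple_iff {i : B} {t : W} : s i * t * s i = s i ↔ t = s i := by
  rw [mul_eq_right, mul_eq_one_iff_eq_inv', inv_simple]

noncomputable def reflectionPerm (i : B) : Equiv.Perm (W × ZMod 2) :=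
  Function.Involutive.toPerm (fun p ↦ (s i * p.1 * s i, p.2 + if p.1 = s i then 1 else 0)) <| by
    rintro ⟨t, ε⟩
    have h : s i * (s i * t * s i) * s i = t := by simp [mul_assoc]
    simp only [h, simple_mul_mul_simple_eq_simple_iff, add_assoc, CharTwo.add_self_eq_zero,
      add_zero]

theorem reflectionPerm_apply (i : B) (p : W × ZMod 2) :
    cs.reflectionPerm i p = (s i * p.1 * s i, p.2 + if p.1 = s i then 1 else 0) := rfl

/-- The `(s j * s i) ^ r * s j` with `r < 2 * n` are the reflections crossed by the word
`(i j) ^ n`. -/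
theorem reflectionPerm_mul_pow_apply (i j : B) (n : ℕ) (p : W × ZMod 2) :
    ((cs.reflectionPerm i * cs.reflectionPerm j) ^ n) p =
      ((s i * s j) ^ n * p.1 * ((s i * s j) ^ n)⁻¹,
        p.2 + ∑ r ∈ Finset.range (2 * n), if p.1 = (s j * s i) ^ r * s j then 1 else 0) := by
  have hinv : (s i * s j)⁻¹ = s j * s i := by simp [inv_simple]
  have hsemi : ∀ n : ℕ, s j * (s i * s j) ^ n = (s j * s i) ^ n * s j := fun n ↦
    (SemiconjBy.pow_right (by simp [SemiconjBy, mul_assoc]) n).eq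
  induction n generalizing p with
  | zero => simp
  | succ n ih =>
    rw [pow_succ', Equiv.Perm.mul_apply, ih, Equiv.Perm.mul_apply, reflectionPerm_apply,
      reflectionPerm_apply]
    refine Prod.ext (by simp only [pow_succ', mul_inv_rev, hinv]; group) ?_
    have hx : ((s i * s j) ^ n)⁻¹ = (s j * s i) ^ n := by rw [← inv_pow, hinv]
    have h1 : ((s i * s j) ^ n)⁻¹ * s j * (s i * s j) ^ n = (s j * s i) ^ (2 * n) * s j := by
      rw [mul_assoc, hsemi, hx, ← mul_assoc, ← pow_add, two_mul]
    have h2 : ((s i * s j) ^ n)⁻¹ * (s j * s i * s j) * (s i * s j) ^ n =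
        (s j * s i) ^ (2 * n + 1) * s j := by
      calc _ = (s j * s i) ^ n * (s j * s i) * (s j * (s i * s j) ^ n) := by rw [hx]; group
        _ = _ := by rw [hsemi, show 2 * n + 1 = n + 1 + n by ring, pow_add, pow_succ]; group
    have h3 (u : W) : s j * u * s j = s i ↔ u = s j * s i * s j := by
      simpa [inv_simple] using mul_mul_inv_eq_iff (a := s j) (t := u) (u := s i)
    simp only [h3, mul_mul_inv_eq_iff, h1, h2, mul_add, mul_one, Finset.sum_range_succ]
    ring

theorem isLiftable_reflectionPerm : M.IsLiftable cs.reflectionPerm := by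
  intro i j
  refine Equiv.ext fun p ↦ ?_
  -- `(s j * s i) ^ M i j = 1`, so the `2 * M i j` terms of the sum come in equal pairs.
  have hsum : ∑ r ∈ Finset.range (2 * M i j),
      (if p.1 = (s j * s i) ^ r * s j then (1 : ZMod 2) else 0) = 0 := by
    simp only [two_mul, Finset.sum_range_add, pow_add, simple_mul_simple_pow', one_mul,
      CharTwo.add_self_eq_zero]
  rw [reflectionPerm_mul_pow_apply, hsum, simple_mul_simple_pow]
  simp

noncomputable def reflectionAction : W →* Equiv.Perm (W × ZMod 2) :=
  cs.lift ⟨cs.reflectionPerm, cs.isLiftable_reflectionPerm⟩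

theorem reflectionAction_wordProd_apply (ω : List B) (p : W × ZMod 2) :
    cs.reflectionAction (π ω) p =
      (π ω * p.1 * (π ω)⁻¹, p.2 + ((cs.rightInvSeq ω).count p.1 : ZMod 2)) := by
  induction ω generalizing p with
  | nil => simp [rightInvSeq]
  | cons i ω ih =>
    rw [wordProd_cons, map_mul, Equiv.Perm.mul_apply, ih, reflectionAction, lift_apply_simple,
      reflectionPerm_apply, rightInvSeq, List.count_cons, mul_mul_inv_eq_iff]
    refine Prod.ext (by simp only [mul_inv_rev, inv_simple]; group) ?_
    simp only [beq_iff_eq, eq_comm (a := p.1)]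
    push_cast
    ring

theorem count_rightInvSeq_eq_of_wordProd_eq {ω ω' : List B} (h : π ω = π ω') (t : W) :
    ((cs.rightInvSeq ω).count t : ZMod 2) = (cs.rightInvSeq ω').count t := by
  simpa [reflectionAction_wordProd_apply] using
    congrArg (fun w ↦ (cs.reflectionAction w (t, 0)).2) h

theorem count_leftInvSeq_eq_of_wordProd_eq {ω ω' : List B} (h : π ω = π ω') (t : W) :
    ((cs.leftInvSeq ω).count t : ZMod 2) = (cs.leftInvSeq ω').count t := by
  have := cs.count_rightInvSeq_eq_of_wordProd_eq (ω := ω.reverse) (ω' := ω'.reverse)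
    (by rw [wordProd_reverse, wordProd_reverse, h]) t
  rwa [rightInvSeq_reverse, rightInvSeq_reverse, List.count_reverse, List.count_reverse] at this

theorem simple_mem_leftInvSeq_of_isLeftDescent {ω : List B} {i : B}
    (h : cs.IsLeftDescent (π ω) i) : s i ∈ cs.leftInvSeq ω := by
  obtain ⟨ω', hω', hprod⟩ := cs.exists_isReduced (s i * π ω)
  have hπ : π (i :: ω') = π ω := by rw [wordProd_cons, ← hprod, simple_mul_simple_cancel_left]
  have hred : cs.IsReduced (i :: ω') := by
    have := cs.length_simple_mul (π ω) i
    rw [IsReduced, hπ, List.length_cons, ← hω'.eq, ← hprod]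
    unfold IsLeftDescent at h
    omega
  have hcount : (cs.leftInvSeq (i :: ω')).count (s i) = 1 :=
    List.count_eq_one_of_mem hred.nodup_leftInvSeq (by simp [leftInvSeq])
  have hpar := cs.count_leftInvSeq_eq_of_wordProd_eq hπ (s i)
  rw [hcount] at hpar
  refine List.count_pos_iff.mp (Nat.pos_of_ne_zero fun h0 ↦ ?_)
  simp [h0] at hpar

theorem exists_eraseIdx_of_isLeftDescent {ω : List B} {i : B} (h : cs.IsLeftDescent (π ω) i) :
    ∃ j < ω.length, s i * π ω = π (ω.eraseIdx j) := by
  obtain ⟨j, hj, hget⟩ := List.getElem_of_mem (cs.simple_mem_leftInvSeq_of_isLeftDescent h)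
  refine ⟨j, by simpa using hj, ?_⟩
  rw [← hget, ← List.getD_eq_getElem _ 1, getD_leftInvSeq_mul_wordProd]

/-- `u ≤ w` in the right weak order. -/
def IsPrefix (u w : W) : Prop := ℓ u + ℓ (u⁻¹ * w) = ℓ w

section WeakOrder

variable {cs}

theorem isPrefix_iff_le {u w : W} : cs.IsPrefix u w ↔ ℓ u + ℓ (u⁻¹ * w) ≤ ℓ w := by
  refine ⟨le_of_eq, fun h ↦ le_antisymm h ?_⟩
  simpa using cs.length_mul_le u (u⁻¹ * w)

theorem IsPrefix.simple_mul {u w : W} {i : B} (hu : cs.IsPrefix u w) (hi : cs.IsLeftDescent w i)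
    (hsu : ℓ (s i * u) = ℓ u + 1) : cs.IsPrefix (s i * u) w := by
  obtain ⟨ω₁, hω₁, hu₁⟩ := cs.exists_isReduced u
  obtain ⟨ω₂, hω₂, hu₂⟩ := cs.exists_isReduced (u⁻¹ * w)
  have hw : w = π (ω₁ ++ ω₂) := by rw [wordProd_append, ← hu₁, ← hu₂, mul_inv_cancel_left]
  rw [hw] at hi
  obtain ⟨j, hj, hex⟩ := cs.exists_eraseIdx_of_isLeftDescent hi
  rw [← hw] at hex
  rw [List.length_append] at hj
  rcases lt_or_ge j ω₁.length with hj₁ | hj₁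
  · rw [List.eraseIdx_append_of_lt_length hj₁, wordProd_append, ← hu₂] at hex
    have hprefix : s i * u = π (ω₁.eraseIdx j) := by
      simpa [mul_assoc] using congrArg (· * (u⁻¹ * w)⁻¹) hex
    have := cs.length_wordProd_le (ω₁.eraseIdx j)
    rw [List.length_eraseIdx_of_lt hj₁, ← hprefix, hsu, ← hω₁.eq, ← hu₁] at this
    omega
  · rw [List.eraseIdx_append_of_length_le hj₁, wordProd_append, ← hu₁] at hex
    have hcompl : (s i * u)⁻¹ * w = π (ω₂.eraseIdx (j - ω₁.length)) := by
      rw [mul_inv_rev, inv_simple, mul_assoc, hex, inv_mul_cancel_left]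
    have := cs.length_wordProd_le (ω₂.eraseIdx (j - ω₁.length))
    rw [List.length_eraseIdx_of_lt (by omega)] at this
    have hlen₂ : ℓ (u⁻¹ * w) = ω₂.length := by rw [hu₂, hω₂.eq]
    rw [isPrefix_iff_le, hcompl, hsu]
    unfold IsPrefix at hu
    omega

theorem isPrefix_wordProd {w : W} {ω : List B} (hω : cs.IsReduced ω)
    (hdesc : ∀ i ∈ ω, cs.IsLeftDescent w i) : cs.IsPrefix (π ω) w := by
  induction ω with
  | nil => simp [IsPrefix]
  | cons i ω ih =>
    have hω' : cs.IsReduced ω := by simpa using hω.drop 1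
    rw [wordProd_cons]
    refine (ih hω' fun j hj ↦ hdesc j (List.mem_cons_of_mem i hj)).simple_mul
      (hdesc i List.mem_cons_self) ?_
    rw [← wordProd_cons, hω.eq, hω'.eq, List.length_cons]

theorem exists_isReduced_of_mem_closure {I : Set W} (hI : I ⊆ Set.range cs.simple) {u : W}
    (hu : u ∈ Subgroup.closure I) :
    ∃ ω : List B, cs.IsReduced ω ∧ π ω = u ∧ ∀ i ∈ ω, s i ∈ I := by
  have step : ∀ x ∈ I, ∀ y : W, (∃ ω : List B, cs.IsReduced ω ∧ π ω = y ∧ ∀ i ∈ ω, s i ∈ I) →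
      ∃ ω : List B, cs.IsReduced ω ∧ π ω = x * y ∧ ∀ i ∈ ω, s i ∈ I := by
    rintro x hx y ⟨ω, hω, rfl, hωI⟩
    obtain ⟨i, rfl⟩ := hI hx
    rcases cs.length_simple_mul (π ω) i with hup | hdown
    · refine ⟨i :: ω, ?_, wordProd_cons .., ?_⟩
      · rw [IsReduced, wordProd_cons, hup, hω.eq, List.length_cons]
      · simpa [hx] using hωI
    · obtain ⟨j, hj, hex⟩ := cs.exists_eraseIdx_of_isLeftDescent (ω := ω) (i := i)
        (by unfold IsLeftDescent; omega)
      refine ⟨ω.eraseIdx j, ?_, hex.symm, fun k hk ↦ hωI k (List.mem_of_mem_eraseIdx hk)⟩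
      rw [IsReduced, ← hex, List.length_eraseIdx_of_lt hj, ← hω.eq]
      omega
  induction hu using Subgroup.closure_induction_left with
  | one => exact ⟨[], by simp [IsReduced], rfl, by simp⟩
  | mul_left x hx y _ ih => exact step x hx y ih
  | inv_mul_cancel x hx y _ ih =>
    obtain ⟨i, rfl⟩ := hI hx
    simpa only [inv_simple] using step _ hx y ih

theorem isPrefix_of_mem_closure {I : Set W} (hI : I ⊆ Set.range cs.simple) {w u : W}
    (hdesc : ∀ t ∈ I, ℓ (t * w) < ℓ w) (hu : u ∈ Subgroup.closure I) : cs.IsPrefix u w := by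
  obtain ⟨ω, hω, rfl, hωI⟩ := cs.exists_isReduced_of_mem_closure hI hu
  exact isPrefix_wordProd hω fun i hi ↦ hdesc _ (hωI i hi)

end WeakOrder

theorem finite_of_forall_length_le [Finite B] {H : Subgroup W} {n : ℕ} (h : ∀ u ∈ H, ℓ u ≤ n) :
    Finite H := by
  refine Set.Finite.to_subtype (((List.finite_length_le B n).image cs.wordProd).subset ?_)
  intro u hu
  obtain ⟨ω, hω, rfl⟩ := cs.exists_isReduced u
  exact ⟨ω, by simpa [hω.eq] using h _ hu, rfl⟩

theorem length_map_le (f : W →* W) (hf : ∀ i, f (s i) ∈ Set.range cs.simple) (v : W) :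
    ℓ (f v) ≤ ℓ v := by
  choose g hg using hf
  obtain ⟨ω, hω, rfl⟩ := cs.exists_isReduced v
  have : f (π ω) = π (ω.map g) := by simp [wordProd, map_list_prod, Function.comp_def, ← hg]
  calc ℓ (f (π ω)) = ℓ (π (ω.map g)) := by rw [this]
    _ ≤ (ω.map g).length := cs.length_wordProd_le _
    _ = ℓ (π ω) := by rw [List.length_map, hω.eq]

theorem length_apply_of_image_eq {γ : MulAut W}
    (hγ : γ '' Set.range cs.simple = Set.range cs.simple) (v : W) : ℓ (γ v) = ℓ v := by
  refine le_antisymm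
    (cs.length_map_le γ.toMonoidHom (fun i ↦ hγ ▸ Set.mem_image_of_mem γ ⟨i, rfl⟩) v) ?_
  have hsymm (i : B) : γ.symm (s i) ∈ Set.range cs.simple := by
    obtain ⟨t, ht, hti⟩ : s i ∈ γ '' Set.range cs.simple := by rw [hγ]; exact ⟨i, rfl⟩
    rwa [← hti, MulEquiv.symm_apply_apply]
  simpa using cs.length_map_le γ.symm.toMonoidHom hsymm (γ v)

end CoxeterSystem

section Longest

variable {B W : Type*} [Group W] {M : CoxeterMatrix B} {cs : CoxeterSystem M W}

theorem IsLongestIn.eq {I : Set W} (hI : I ⊆ Set.range cs.simple) {v₀ v₁ : W}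
    (h₀ : IsLongestIn cs I v₀) (h₁ : IsLongestIn cs I v₁) : v₀ = v₁ := by
  have hdesc : ∀ t ∈ I, cs.length (t * v₀) < cs.length v₀ := by
    intro t ht
    obtain ⟨i, rfl⟩ := hI ht
    exact lt_of_le_of_ne (h₀.2 _ (mul_mem (Subgroup.subset_closure ht) h₀.1))
      (cs.length_simple_mul_ne v₀ i)
  have hpre := cs.isPrefix_of_mem_closure hI hdesc h₁.1
  have h01 := h₀.2 _ h₁.1
  have h10 := h₁.2 _ h₀.1
  have : cs.length (v₁⁻¹ * v₀) = 0 := by unfold CoxeterSystem.IsPrefix at hpre; omega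
  rw [CoxeterSystem.length_eq_zero_iff, inv_mul_eq_one] at this
  exact this.symm

theorem IsLongestIn.apply_eq {I : Set W} (hI : I ⊆ Set.range cs.simple) {v : W}
    (h : IsLongestIn cs I v) {γ : MulAut W} (hγ : γ '' Set.range cs.simple = Set.range cs.simple)
    (hγI : γ '' I ⊆ I) : γ v = v := by
  refine (h.eq hI ⟨?_, fun u hu ↦ ?_⟩).symm
  · have : γ v ∈ (Subgroup.closure I).map γ.toMonoidHom := ⟨v, h.1, rfl⟩
    rw [MonoidHom.map_closure] at this
    exact Subgroup.closure_mono hγI this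
  · rw [cs.length_apply_of_image_eq hγ]
    exact h.2 u hu

end Longest

section Factorization

open List

variable {B W : Type*} [Group W] {M : CoxeterMatrix B} (cs : CoxeterSystem M W)
  (Γ : Subgroup (MulAut W)) (wI : Set W → W)

def IsOrbitFactorization (w : W) (Js : List (Set W)) : Prop :=
  (∀ J ∈ Js, IsFinParabolicOrbit cs Γ J) ∧ w = (Js.map wI).prod ∧
    cs.length w = ((Js.map wI).map cs.length).sum

variable {cs Γ wI}

theorem IsOrbitFactorization.cons {I : Set W} {w : W} {Js : List (Set W)}
    (hI : IsFinParabolicOrbit cs Γ I) (hpre : cs.IsPrefix (wI I) w)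
    (h : IsOrbitFactorization cs Γ wI ((wI I)⁻¹ * w) Js) :
    IsOrbitFactorization cs Γ wI w (I :: Js) := by
  obtain ⟨hJs, hprod, hlen⟩ := h
  refine ⟨forall_mem_cons.mpr ⟨hI, hJs⟩, ?_, ?_⟩
  · rw [map_cons, prod_cons, ← hprod, mul_inv_cancel_left]
  · rw [map_cons, map_cons, sum_cons, ← hlen]
    exact hpre.symm

theorem exists_isFinParabolicOrbit_isPrefix [Finite B]
    (hΓ : ∀ γ ∈ Γ, ⇑γ '' Set.range cs.simple = Set.range cs.simple)
    (hwI : ∀ I : Set W, IsFinParabolicOrbit cs Γ I → IsLongestIn cs I (wI I))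
    {w : W} (hw : w ∈ fixedSubgroup Γ) {i : B} (hi : cs.IsLeftDescent w i) :
    ∃ I, IsFinParabolicOrbit cs Γ I ∧ cs.simple i ∈ I ∧ cs.IsPrefix (wI I) w ∧ wI I ≠ 1 ∧
      (wI I)⁻¹ * w ∈ fixedSubgroup Γ := by
  obtain ⟨I, hIdef⟩ : ∃ I : Set W, I = {t | ∃ γ ∈ Γ, γ (cs.simple i) = t} := ⟨_, rfl⟩
  have hsI : cs.simple i ∈ I := hIdef ▸ ⟨1, one_mem Γ, rfl⟩
  have hIS : I ⊆ Set.range cs.simple := by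
    rw [hIdef]
    rintro _ ⟨γ, hγ, rfl⟩
    rw [← hΓ γ hγ]
    exact Set.mem_image_of_mem γ ⟨i, rfl⟩
  have hdesc : ∀ t ∈ I, cs.length (t * w) < cs.length w := by
    rw [hIdef]
    rintro _ ⟨γ, hγ, rfl⟩
    rwa [← hw γ hγ, ← map_mul, cs.length_apply_of_image_eq (hΓ γ hγ),
      cs.length_apply_of_image_eq (hΓ γ hγ)]
  have hpre (u : W) (hu : u ∈ Subgroup.closure I) : cs.IsPrefix u w :=
    cs.isPrefix_of_mem_closure hIS hdesc hu
  have hI : IsFinParabolicOrbit cs Γ I :=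
    ⟨⟨_, ⟨i, rfl⟩, hIdef⟩, cs.finite_of_forall_length_le (n := cs.length w)
      fun u hu ↦ hpre u hu ▸ Nat.le_add_right _ _⟩
  have hlongest := hwI I hI
  have hfix (γ : MulAut W) (hγ : γ ∈ Γ) : γ (wI I) = wI I := by
    refine hlongest.apply_eq hIS (hΓ γ hγ) ?_
    rw [hIdef]
    rintro _ ⟨_, ⟨δ, hδ, rfl⟩, rfl⟩
    exact ⟨γ * δ, mul_mem hγ hδ, rfl⟩
  refine ⟨I, hI, hsI, hpre _ hlongest.1, fun h1 ↦ ?_, fun γ hγ ↦ ?_⟩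
  · have := hlongest.2 _ (Subgroup.subset_closure hsI)
    rw [h1, length_one, length_simple] at this
    omega
  · rw [map_mul, map_inv, hfix γ hγ, hw γ hγ]

theorem exists_isOrbitFactorization [Finite B]
    (hΓ : ∀ γ ∈ Γ, ⇑γ '' Set.range cs.simple = Set.range cs.simple)
    (hwI : ∀ I : Set W, IsFinParabolicOrbit cs Γ I → IsLongestIn cs I (wI I))
    (w : W) (hw : w ∈ fixedSubgroup Γ) : ∃ Js, IsOrbitFactorization cs Γ wI w Js := by
  by_cases h1 : w = 1
  · exact ⟨[], by simp [IsOrbitFactorization, h1]⟩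
  obtain ⟨i, hi⟩ := cs.exists_leftDescent_of_ne_one h1
  obtain ⟨I, hI, -, hpre, hne, hfix⟩ := exists_isFinParabolicOrbit_isPrefix hΓ hwI hw hi
  have hlt : cs.length ((wI I)⁻¹ * w) < cs.length w := by
    have := mt cs.length_eq_zero_iff.mp hne
    unfold CoxeterSystem.IsPrefix at hpre
    omega
  obtain ⟨Js, hJs⟩ := exists_isOrbitFactorization hΓ hwI _ hfix
  exact ⟨I :: Js, hJs.cons hI hpre⟩
termination_by cs.length w

end Factorization

/-- every `w ∈ W^Γ` factors length-additively as a product of longest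
elements `w_{J_i}` with `J_i ∈ S̄`; moreover if `l(sw) < l(w)` then one can take `s ∈ J₁`. -/
theorem exists_factorization {B W : Type*} [Finite B] [Group W] {M : CoxeterMatrix B}
    (cs : CoxeterSystem M W) (Γ : Subgroup (MulAut W))
    (hΓ : ∀ γ ∈ Γ, ⇑γ '' Set.range cs.simple = Set.range cs.simple)
    (wI : Set W → W)
    (hwI : ∀ I : Set W, IsFinParabolicOrbit cs Γ I → IsLongestIn cs I (wI I))
    (w : W) (hw : w ∈ fixedSubgroup Γ) :
    (∃ Js : List (Set W), (∀ J ∈ Js, IsFinParabolicOrbit cs Γ J) ∧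
        w = (Js.map wI).prod ∧
        cs.length w = ((Js.map wI).map cs.length).sum) ∧
      ∀ s ∈ Set.range cs.simple, cs.length (s * w) < cs.length w →
        ∃ Js : List (Set W), (∀ J ∈ Js, IsFinParabolicOrbit cs Γ J) ∧
          w = (Js.map wI).prod ∧
          cs.length w = ((Js.map wI).map cs.length).sum ∧
          ∃ J₁, Js.head? = some J₁ ∧ s ∈ J₁ := by
  refine ⟨exists_isOrbitFactorization hΓ hwI w hw, ?_⟩
  rintro _ ⟨i, rfl⟩ hi
  obtain ⟨I, hI, hsI, hpre, -, hfix⟩ := exists_isFinParabolicOrbit_isPrefix hΓ hwI hw hi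
  obtain ⟨Js, hJs⟩ := exists_isOrbitFactorization hΓ hwI _ hfix
  obtain ⟨hJ, hprod, hlen⟩ := hJs.cons hI hpre
  exact ⟨I :: Js, hJ, hprod, hlen, I, rfl, hsI⟩
end

section
/- Let I, J ∈ S̄ with I ≠ J and set K := I ∪ J. Then the group of Γ-fixed points W_K^Γ of the parabolic subgroup W_K equals the subgroup generated by the two involutions w_I and w_J; in particular W_K^Γ is a dihedral group. -/
open CoxeterSystem

/-!
Tits' permutation representation of `W` on `W × ZMod 2` (where `s i` conjugates the first
coordinate and flips the second one at `s i` itself) yields the reflection cocycle `η(w, t)`,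
equal to `1` exactly when `t` is a right inversion of `w`, with
`η(u v, t) = η(v, t) + η(u, v t v⁻¹)`. This gives the strong exchange condition and, from it,
the facts about a parabolic subgroup `W_X` that the argument needs: its longest element `w_X` is
the only element of `W_X` having every `i ∈ X` as a right descent (so it is an involution, fixed
by every automorphism preserving `S` and `X`), and if `w` has every `i ∈ X` as a right descent,
then `w w_X` is the shortest element of `w W_X`.

Now let `w ≠ 1` be a `Γ`-fixed element of `W_{I ∪ J}`. It has a right descent in `I ∪ J`, say in
`I`. As `Γ` acts transitively on `I` and preserves length, every element of `I` is then a right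
descent of `w`, so `w w_I` is a shorter `Γ`-fixed element of `W_{I ∪ J}`; induction on the length
puts `w` in `⟨w_I, w_J⟩`.
-/

open List

theorem Subgroup.le_closure_of_exists_mul_lt {G : Type*} [Group G] (f : G → ℕ) {H : Subgroup G}
    {T : Set G} (hT : T ⊆ H) (hdesc : ∀ w ∈ H, w ≠ 1 → ∃ g ∈ T, f (w * g) < f w) :
    H ≤ Subgroup.closure T := by
  intro w hw
  induction hn : f w using Nat.strong_induction_on generalizing w with
  | _ n ih =>
    by_cases h1 : w = 1
    · exact h1 ▸ one_mem _
    obtain ⟨g, hg, hlt⟩ := hdesc w hw h1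
    have hwg := ih _ (hn ▸ hlt) (mul_mem hw (hT hg)) rfl
    simpa using mul_mem hwg (inv_mem (Subgroup.subset_closure hg))

section Orbit

variable {W : Type*} [Group W] {Γ : Subgroup (MulAut W)} {s₀ : W} {I : Set W}

theorem image_subset_of_eq_orbit (hI : I = {t | ∃ γ ∈ Γ, γ s₀ = t}) {γ : MulAut W}
    (hγ : γ ∈ Γ) : γ '' I ⊆ I := by
  subst hI
  rintro _ ⟨_, ⟨δ, hδ, rfl⟩, rfl⟩
  exact ⟨γ * δ, mul_mem hγ hδ, rfl⟩

theorem exists_apply_eq_of_eq_orbit (hI : I = {t | ∃ γ ∈ Γ, γ s₀ = t}) {t t' : W} (ht : t ∈ I)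
    (ht' : t' ∈ I) : ∃ γ ∈ Γ, γ t = t' := by
  subst hI
  obtain ⟨δ, hδ, rfl⟩ := ht
  obtain ⟨δ', hδ', rfl⟩ := ht'
  exact ⟨δ' * δ⁻¹, mul_mem hδ' (inv_mem hδ), by simp⟩

end Orbit

namespace CoxeterSystem

variable {B W : Type*} [Group W] {M : CoxeterMatrix B} (cs : CoxeterSystem M W)

local prefix:100 "s" => cs.simple
local prefix:100 "π" => cs.wordProd
local prefix:100 "ℓ" => cs.length
local prefix:100 "ris" => cs.rightInvSeq
local prefix:100 "lis" => cs.leftInvSeq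

open Classical in
noncomputable def titsSimple (i : B) : Equiv.Perm (W × ZMod 2) :=
  Function.Involutive.toPerm (fun p => (s i * p.1 * s i, p.2 + if p.1 = s i then 1 else 0)) <| by
    rintro ⟨t, z⟩
    have : s i * (t * s i) = s i ↔ t = s i := by
      rw [mul_eq_left, mul_eq_one_iff_eq_inv, inv_simple]
    simp only [mul_assoc, this, simple_mul_simple_cancel_left, simple_mul_simple_self, mul_one,
      add_assoc, CharTwo.add_self_eq_zero, add_zero]

open Classical in
theorem titsSimple_apply (i : B) (t : W) (z : ZMod 2) :
    cs.titsSimple i (t, z) = (s i * t * s i, z + if t = s i then 1 else 0) :=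
  rfl

theorem prod_map_titsSimple_apply [DecidableEq W] (ω : List B) (t : W) (z : ZMod 2) :
    (ω.map cs.titsSimple).prod (t, z) = (π ω * t * (π ω)⁻¹, z + (ris ω).count t) := by
  induction ω generalizing z with
  | nil => simp
  | cons i ω ih =>
    have hcond : π ω * t * (π ω)⁻¹ = s i ↔ (π ω)⁻¹ * s i * π ω = t := by
      constructor
      · intro h; rw [← h]; group
      · rintro rfl; group
    rw [map_cons, prod_cons, Equiv.Perm.mul_apply, ih]
    simp only [titsSimple_apply, hcond, rightInvSeq, count_cons, beq_iff_eq, wordProd_cons,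
      mul_inv_rev, inv_simple, Prod.mk.injEq]
    refine ⟨by group, ?_⟩
    split_ifs <;> push_cast <;> ring

theorem rightInvSeq_eq_map_leftInvSeq (ω : List B) :
    ris ω = (lis ω).map (MulAut.conj (π ω)⁻¹) := by
  induction ω with
  | nil => rfl
  | cons i ω ih =>
    simp only [rightInvSeq, leftInvSeq, ih, map_cons, map_map, wordProd_cons, cons.injEq]
    constructor
    · simp [mul_assoc]
    · congr 1
      ext x
      simp [mul_assoc]

theorem prod_alternatingWord_two_mul_eq_one (i j : B) :
    π (alternatingWord i j (2 * M i j)) = 1 := by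
  rw [prod_alternatingWord_eq_mul_pow]
  simp [simple_mul_simple_pow]

theorem even_count_rightInvSeq_alternatingWord [DecidableEq W] (i j : B) (t : W) :
    Even ((ris (alternatingWord i j (2 * M i j))).count t) := by
  set L := lis (alternatingWord i j (2 * M i j)) with hL
  -- `L[k]` is the product of `alternatingWord j i (2 * k + 1)`, which has period `M i j` in `k`
  have hperiod : L.take (M i j) = L.drop (M i j) := by
    apply List.ext_getElem (by simp [L]; omega)
    intro k hk _
    simp only [getElem_take, getElem_drop, L]
    rw [getElem_leftInvSeq_alternatingWord cs i j _ k (by simp [L] at hk; omega),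
      getElem_leftInvSeq_alternatingWord cs i j _ _ (by simp [L] at hk; omega),
      prod_alternatingWord_eq_mul_pow, prod_alternatingWord_eq_mul_pow]
    rw [show (2 * (M i j + k) + 1) / 2 = (2 * k + 1) / 2 + M i j by omega, pow_add,
      M.symmetric, simple_mul_simple_pow, mul_one]
    simp [parity_simps]
  rw [rightInvSeq_eq_map_leftInvSeq, prod_alternatingWord_two_mul_eq_one, inv_one, map_one,
    MulAut.one_def, MulEquiv.coe_refl, map_id, ← hL, ← take_append_drop (M i j) L, count_append,
    hperiod]
  exact Even.add_self _

theorem isLiftable_titsSimple : M.IsLiftable cs.titsSimple := by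
  classical
  intro i j
  have hpow (m : ℕ) : (cs.titsSimple i * cs.titsSimple j) ^ m =
      ((alternatingWord i j (2 * m)).map cs.titsSimple).prod := by
    induction m with
    | zero => simp [alternatingWord]
    | succ m ih =>
      rw [pow_succ', ih, show 2 * (m + 1) = 2 * m + 1 + 1 by ring, alternatingWord_succ',
        alternatingWord_succ']
      simp [mul_assoc]
  ext ⟨t, z⟩ : 1
  rw [hpow, prod_map_titsSimple_apply, prod_alternatingWord_two_mul_eq_one,
    (ZMod.natCast_eq_zero_iff_even).mpr (cs.even_count_rightInvSeq_alternatingWord i j t)]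
  simp

noncomputable def titsRep : W →* Equiv.Perm (W × ZMod 2) :=
  cs.lift ⟨cs.titsSimple, cs.isLiftable_titsSimple⟩

theorem titsRep_wordProd (ω : List B) : cs.titsRep (π ω) = (ω.map cs.titsSimple).prod := by
  simp [titsRep, wordProd, map_list_prod, Function.comp_def, lift_apply_simple]

noncomputable def reflCocycle (w t : W) : ZMod 2 := (cs.titsRep w (t, 0)).2

theorem reflCocycle_wordProd [DecidableEq W] (ω : List B) (t : W) :
    cs.reflCocycle (π ω) t = (ris ω).count t := by
  simp [reflCocycle, titsRep_wordProd, prod_map_titsSimple_apply]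

theorem titsRep_apply (w t : W) (z : ZMod 2) :
    cs.titsRep w (t, z) = (w * t * w⁻¹, z + cs.reflCocycle w t) := by
  classical
  obtain ⟨ω, rfl⟩ := cs.wordProd_surjective w
  simp [reflCocycle, titsRep_wordProd, prod_map_titsSimple_apply]

theorem reflCocycle_mul (u v t : W) :
    cs.reflCocycle (u * v) t = cs.reflCocycle v t + cs.reflCocycle u (v * t * v⁻¹) := by
  conv_lhs => rw [reflCocycle, map_mul, Equiv.Perm.mul_apply, titsRep_apply, titsRep_apply]
  rw [zero_add]

theorem reflCocycle_one (t : W) : cs.reflCocycle 1 t = 0 := by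
  simp [reflCocycle]

theorem reflCocycle_simple_self (i : B) : cs.reflCocycle (s i) (s i) = 1 := by
  classical
  simpa using cs.reflCocycle_wordProd [i] (s i)

theorem reflCocycle_self {t : W} (ht : cs.IsReflection t) : cs.reflCocycle t t = 1 := by
  obtain ⟨u, i, rfl⟩ := ht
  have hconj : u⁻¹ * (u * s i * u⁻¹) * u⁻¹⁻¹ = s i := by group
  have h₁ := cs.reflCocycle_mul (u * s i) u⁻¹ (u * s i * u⁻¹)
  have h₂ := cs.reflCocycle_mul u (s i) (s i)
  have h₃ := cs.reflCocycle_mul u u⁻¹ (u * s i * u⁻¹)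
  simp only [hconj, mul_inv_cancel_right, mul_inv_cancel, reflCocycle_one,
    reflCocycle_simple_self] at h₁ h₂ h₃
  rw [h₁, h₂, ← add_assoc, add_right_comm, ← h₃, zero_add]

theorem mem_rightInvSeq_of_reflCocycle_eq_one {ω : List B} {t : W}
    (h : cs.reflCocycle (π ω) t = 1) : t ∈ ris ω := by
  classical
  rw [reflCocycle_wordProd] at h
  by_contra ht
  simp [count_eq_zero_of_not_mem ht] at h

theorem isRightInversion_of_reflCocycle_eq_one {w t : W} (h : cs.reflCocycle w t = 1) :
    cs.IsRightInversion w t := by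
  obtain ⟨ω, hω, rfl⟩ := cs.exists_isReduced w
  exact cs.isRightInversion_of_mem_rightInvSeq hω (cs.mem_rightInvSeq_of_reflCocycle_eq_one h)

theorem IsRightInversion.reflCocycle_eq_one {w t : W} (h : cs.IsRightInversion w t) :
    cs.reflCocycle w t = 1 := by
  by_contra hne
  have h₀ : cs.reflCocycle w t = 0 := (by decide : ∀ a : ZMod 2, a ≠ 1 → a = 0) _ hne
  have hwt : cs.IsRightInversion (w * t) t := by
    apply cs.isRightInversion_of_reflCocycle_eq_one
    rw [reflCocycle_mul, cs.reflCocycle_self h.1, mul_inv_cancel_right, h₀, add_zero]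
  have := hwt.2
  rw [mul_assoc, h.1.mul_self, mul_one] at this
  exact lt_asymm this h.2

theorem reflCocycle_eq_one_iff {w t : W} :
    cs.reflCocycle w t = 1 ↔ cs.IsRightInversion w t :=
  ⟨cs.isRightInversion_of_reflCocycle_eq_one, fun h => h.reflCocycle_eq_one⟩

theorem mem_rightInvSeq_of_isRightInversion {ω : List B} {t : W}
    (h : cs.IsRightInversion (π ω) t) : t ∈ ris ω :=
  cs.mem_rightInvSeq_of_reflCocycle_eq_one h.reflCocycle_eq_one

theorem reflCocycle_eq_zero_iff {w t : W} :
    cs.reflCocycle w t = 0 ↔ ¬cs.IsRightInversion w t := by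
  rw [← reflCocycle_eq_one_iff]
  generalize cs.reflCocycle w t = a
  revert a
  decide

section Parabolic

variable {X : Set B}

theorem exists_isReduced_wordProd_eq_mul_simple {ω : List B} (hω : cs.IsReduced ω) (i : B) :
    ∃ ω', cs.IsReduced ω' ∧ ω' ⊆ i :: ω ∧ π ω' = π ω * s i := by
  rcases cs.length_mul_simple (π ω) i with hup | hdown
  · refine ⟨ω.concat i, ?_, fun j hj => by simpa [or_comm] using hj,
      cs.wordProd_concat i ω⟩
    rw [IsReduced, wordProd_concat, hup, hω, length_concat]
  · have hinv : cs.IsRightInversion (π ω) (s i) := ⟨cs.isReflection_simple i, by omega⟩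
    obtain ⟨j, hj, hjeq⟩ := getElem_of_mem (cs.mem_rightInvSeq_of_isRightInversion hinv)
    have hprod : π (ω.eraseIdx j) = π ω * s i := by
      rw [← wordProd_mul_getD_rightInvSeq, getD_eq_getElem _ _ hj, hjeq]
    refine ⟨ω.eraseIdx j, ?_, fun k hk => mem_cons_of_mem i ((eraseIdx_sublist ω j).subset hk),
      hprod⟩
    rw [length_rightInvSeq] at hj
    rw [IsReduced, hprod, length_eraseIdx_of_lt hj]
    have := hω.eq
    omega

theorem exists_isReduced_of_mem_closure_s7 {w : W} (hw : w ∈ Subgroup.closure (cs.simple '' X)) :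
    ∃ ω, cs.IsReduced ω ∧ (∀ i ∈ ω, i ∈ X) ∧ π ω = w := by
  have step {w : W} (i : B) (hi : i ∈ X)
      (ih : ∃ ω, cs.IsReduced ω ∧ (∀ i ∈ ω, i ∈ X) ∧ π ω = w) :
      ∃ ω, cs.IsReduced ω ∧ (∀ i ∈ ω, i ∈ X) ∧ π ω = w * s i := by
    obtain ⟨ω, hω, hωX, rfl⟩ := ih
    obtain ⟨ω', hω', hsub, hprod⟩ := cs.exists_isReduced_wordProd_eq_mul_simple hω i
    refine ⟨ω', hω', fun j hj => ?_, hprod⟩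
    rcases mem_cons.mp (hsub hj) with rfl | hj
    exacts [hi, hωX j hj]
  induction hw using Subgroup.closure_induction_right with
  | one => exact ⟨[], by simp [IsReduced], by simp, rfl⟩
  | mul_right w _ _ hx ih =>
    obtain ⟨i, hi, rfl⟩ := hx
    exact step i hi ih
  | mul_inv_cancel w _ _ hx ih =>
    obtain ⟨i, hi, rfl⟩ := hx
    rw [inv_simple]
    exact step i hi ih

theorem exists_isRightDescent_of_mem_closure {w : W} (hw : w ∈ Subgroup.closure (cs.simple '' X))
    (h1 : w ≠ 1) : ∃ i ∈ X, cs.IsRightDescent w i := by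
  obtain ⟨ω, hω, hωX, rfl⟩ := cs.exists_isReduced_of_mem_closure_s7 hw
  obtain ⟨ω', i, rfl⟩ := ω.eq_nil_or_concat.resolve_left (by rintro rfl; exact h1 rfl)
  refine ⟨i, hωX i (by simp), ?_⟩
  rw [IsRightDescent, wordProd_concat, simple_mul_simple_cancel_right, ← wordProd_concat, hω,
    length_concat]
  exact Nat.lt_succ_of_le (cs.length_wordProd_le ω')

end Parabolic

section Longest

variable {cs} {X : Set B} {u : W}

theorem _root_.IsLongestIn.isRightInversion {I : Set W} (hu : IsLongestIn cs I u) {t : W}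
    (ht : t ∈ Subgroup.closure I) (htr : cs.IsReflection t) : cs.IsRightInversion u t :=
  ⟨htr, (hu.2 _ (mul_mem hu.1 ht)).lt_of_ne (htr.length_mul_left_ne u)⟩

theorem _root_.IsLongestIn.isRightDescent (hu : IsLongestIn cs (cs.simple '' X) u) {i : B}
    (hi : i ∈ X) : cs.IsRightDescent u i :=
  (cs.isRightInversion_simple_iff_isRightDescent u i).mp <|
    hu.isRightInversion (Subgroup.subset_closure ⟨i, hi, rfl⟩) (cs.isReflection_simple i)

theorem _root_.IsLongestIn.eq_of_isRightDescent (hu : IsLongestIn cs (cs.simple '' X) u) {v : W}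
    (hv : v ∈ Subgroup.closure (cs.simple '' X)) (hdesc : ∀ i ∈ X, cs.IsRightDescent v i) :
    v = u := by
  have hy : u⁻¹ * v ∈ Subgroup.closure (cs.simple '' X) := mul_mem (inv_mem hu.1) hv
  suffices u⁻¹ * v = 1 by rwa [inv_mul_eq_one, eq_comm] at this
  by_contra hy1
  obtain ⟨i, hi, hyi⟩ := cs.exists_isRightDescent_of_mem_closure hy hy1
  -- every reflection of `W_X` is a right inversion of `u`, so `u⁻¹ * v` and `v` have
  -- complementary descents in `X`
  have hu_conj := hu.isRightInversion (mul_mem (mul_mem hy (Subgroup.subset_closure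
    ⟨i, hi, rfl⟩)) (inv_mem hy)) ((cs.isReflection_simple i).conj (u⁻¹ * v))
  have hv_i := ((cs.isRightInversion_simple_iff_isRightDescent v i).mpr (hdesc i hi))
  have hy_i := ((cs.isRightInversion_simple_iff_isRightDescent _ i).mpr hyi)
  have := hv_i.reflCocycle_eq_one
  rw [show v = u * (u⁻¹ * v) by group, reflCocycle_mul, hy_i.reflCocycle_eq_one,
    hu_conj.reflCocycle_eq_one] at this
  exact absurd this (by decide)

theorem _root_.IsLongestIn.unique (hu : IsLongestIn cs (cs.simple '' X) u) {v : W}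
    (hv : IsLongestIn cs (cs.simple '' X) v) : v = u :=
  hu.eq_of_isRightDescent hv.1 fun _ hi => hv.isRightDescent hi

theorem _root_.IsLongestIn.inv {I : Set W} (hu : IsLongestIn cs I u) : IsLongestIn cs I u⁻¹ :=
  ⟨inv_mem hu.1, by simpa [length_inv] using hu.2⟩

theorem _root_.IsLongestIn.mul_self (hu : IsLongestIn cs (cs.simple '' X) u) : u * u = 1 :=
  mul_eq_one_iff_eq_inv.mpr (hu.unique hu.inv).symm

theorem _root_.IsLongestIn.length_mul_le (hu : IsLongestIn cs (cs.simple '' X) u) {w : W}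
    (hw : ∀ i ∈ X, cs.IsRightDescent w i) {h : W} (hh : h ∈ Subgroup.closure (cs.simple '' X)) :
    ℓ (w * u) ≤ ℓ (w * h) := by
  obtain ⟨h₀, hh₀, hmin⟩ : ∃ h₀ ∈ Subgroup.closure (cs.simple '' X),
      ∀ h ∈ Subgroup.closure (cs.simple '' X), ℓ (w * h₀) ≤ ℓ (w * h) :=
    ⟨_, Function.argminOn_mem _ _ ⟨1, one_mem _⟩,
      fun h hh => Function.argminOn_le (fun h => ℓ (w * h)) _ hh⟩
  -- `w * h₀` has no right inversion in `W_X`, so `w` and `h₀⁻¹` have the same ones in `W_X`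
  have hx : ∀ t ∈ Subgroup.closure (cs.simple '' X), cs.reflCocycle (w * h₀) t = 0 := by
    intro t ht
    rw [reflCocycle_eq_zero_iff]
    intro hinv
    have := hmin _ (mul_mem hh₀ ht)
    rw [← mul_assoc] at this
    exact absurd hinv.2 this.not_gt
  have hh₀u : h₀⁻¹ = u := by
    refine hu.eq_of_isRightDescent (inv_mem hh₀) fun i hi => ?_
    have := ((cs.isRightInversion_simple_iff_isRightDescent w i).mpr (hw i hi)).reflCocycle_eq_one
    rw [show w = w * h₀ * h₀⁻¹ by group, reflCocycle_mul, hx _ (mul_mem (mul_mem (inv_mem hh₀)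
      (Subgroup.subset_closure ⟨i, hi, rfl⟩)) (inv_mem (inv_mem hh₀))), add_zero] at this
    exact (cs.isRightInversion_simple_iff_isRightDescent _ i).mp
      (cs.isRightInversion_of_reflCocycle_eq_one this)
  rw [← inv_inv h₀, hh₀u, inv_eq_of_mul_eq_one_right hu.mul_self] at hmin
  exact hmin h hh

end Longest

section Automorphism

variable {γ : MulAut W}

theorem length_apply_le_of_image_range_simple
    (hγ : γ '' Set.range cs.simple ⊆ Set.range cs.simple) (w : W) : ℓ (γ w) ≤ ℓ w := by
  obtain ⟨ω, hω, rfl⟩ := cs.exists_isReduced w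
  choose σ hσ using fun i => hγ (Set.mem_image_of_mem γ (Set.mem_range_self i))
  have hmap : γ (π ω) = π (ω.map σ) := by
    simp [wordProd, map_list_prod, Function.comp_def, hσ]
  rw [hmap, hω.eq, ← length_map σ]
  exact cs.length_wordProd_le _

theorem length_apply_of_image_range_simple (hγ : γ '' Set.range cs.simple = Set.range cs.simple)
    (w : W) : ℓ (γ w) = ℓ w := by
  have hγ_inv : ⇑(γ⁻¹) '' Set.range cs.simple ⊆ Set.range cs.simple := by
    nth_rw 1 [← hγ]
    simp [Set.image_image]
  refine (cs.length_apply_le_of_image_range_simple hγ.subset w).antisymm ?_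
  simpa using cs.length_apply_le_of_image_range_simple hγ_inv (γ w)

variable {cs} in
theorem _root_.IsLongestIn.apply_eq_s7 {X : Set B} {u : W} (hu : IsLongestIn cs (cs.simple '' X) u)
    (hγ : γ '' Set.range cs.simple = Set.range cs.simple)
    (hX : γ '' (cs.simple '' X) ⊆ cs.simple '' X) : γ u = u := by
  have hγu : γ u ∈ Subgroup.closure (cs.simple '' X) := by
    have : Subgroup.closure (cs.simple '' X) ≤
        (Subgroup.closure (cs.simple '' X)).comap (γ : W →* W) :=
      (Subgroup.closure_le _).mpr fun x hx => Subgroup.subset_closure (hX ⟨x, hx, rfl⟩)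
    exact this hu.1
  exact hu.unique ⟨hγu, fun v hv => (hu.2 v hv).trans_eq
    (cs.length_apply_of_image_range_simple hγ u).symm⟩

end Automorphism

section Orbit

variable {Γ : Subgroup (MulAut W)} (hΓ : ∀ γ ∈ Γ, ⇑γ '' Set.range cs.simple = Set.range cs.simple)
  {s₀ : W}
include hΓ

theorem exists_image_simple_eq_of_eq_orbit {I : Set W} (hs₀ : s₀ ∈ Set.range cs.simple)
    (hI : I = {t | ∃ γ ∈ Γ, γ s₀ = t}) : ∃ X : Set B, cs.simple '' X = I := by
  refine Set.subset_range_iff_exists_image_eq.mp ?_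
  rw [hI]
  rintro _ ⟨γ, hγ, rfl⟩
  rw [← hΓ γ hγ]
  exact Set.mem_image_of_mem γ hs₀

variable {cs} in
theorem _root_.IsLongestIn.length_mul_lt_of_eq_orbit {X : Set B}
    (hX : cs.simple '' X = {t | ∃ γ ∈ Γ, γ s₀ = t}) {u : W}
    (hu : IsLongestIn cs (cs.simple '' X) u) {w : W} (hw : ∀ γ ∈ Γ, γ w = w) {i : B} (hi : i ∈ X)
    (hwi : cs.IsRightDescent w i) : ℓ (w * u) < ℓ w := by
  have hdesc : ∀ j ∈ X, cs.IsRightDescent w j := by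
    intro j hj
    obtain ⟨γ, hγ, hγij⟩ := exists_apply_eq_of_eq_orbit hX ⟨i, hi, rfl⟩ ⟨j, hj, rfl⟩
    have : ℓ (w * cs.simple j) = ℓ (w * cs.simple i) := by
      rw [← hγij, ← cs.length_apply_of_image_range_simple (hΓ γ hγ) (w * cs.simple i), map_mul,
        hw γ hγ]
    rw [IsRightDescent, this]
    exact hwi
  exact (hu.length_mul_le hdesc (Subgroup.subset_closure ⟨i, hi, rfl⟩)).trans_lt hwi

end Orbit

end CoxeterSystem

theorem fixedPoints_union_eq_dihedral_general {B W : Type*} [Group W] {M : CoxeterMatrix B}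
    (cs : CoxeterSystem M W) (Γ : Subgroup (MulAut W))
    (hΓ : ∀ γ ∈ Γ, ⇑γ '' Set.range cs.simple = Set.range cs.simple)
    (wI : Set W → W)
    (hwI : ∀ I : Set W, IsFinParabolicOrbit cs Γ I → IsLongestIn cs I (wI I))
    (I J : Set W) (hI : IsFinParabolicOrbit cs Γ I) (hJ : IsFinParabolicOrbit cs Γ J) :
    wI I * wI I = 1 ∧ wI J * wI J = 1 ∧
      {w : W | w ∈ Subgroup.closure (I ∪ J) ∧ ∀ γ ∈ Γ, γ w = w} =
        (Subgroup.closure {wI I, wI J} : Set W) := by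
  have huI := hwI I hI
  have huJ := hwI J hJ
  obtain ⟨⟨sI, hsI, hIorb⟩, -⟩ := hI
  obtain ⟨⟨sJ, hsJ, hJorb⟩, -⟩ := hJ
  obtain ⟨XI, rfl⟩ := cs.exists_image_simple_eq_of_eq_orbit hΓ hsI hIorb
  obtain ⟨XJ, rfl⟩ := cs.exists_image_simple_eq_of_eq_orbit hΓ hsJ hJorb
  refine ⟨huI.mul_self, huJ.mul_self, ?_⟩
  set H := Subgroup.closure (cs.simple '' XI ∪ cs.simple '' XJ) ⊓ fixedSubgroup Γ
  have hgen : {wI (cs.simple '' XI), wI (cs.simple '' XJ)} ⊆ (H : Set W) := by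
    rintro _ (rfl | rfl)
    · exact ⟨Subgroup.closure_mono Set.subset_union_left huI.1,
        fun γ hγ => huI.apply_eq_s7 (hΓ γ hγ) (image_subset_of_eq_orbit hIorb hγ)⟩
    · exact ⟨Subgroup.closure_mono Set.subset_union_right huJ.1,
        fun γ hγ => huJ.apply_eq_s7 (hΓ γ hγ) (image_subset_of_eq_orbit hJorb hγ)⟩
  change (H : Set W) = _
  refine congrArg _ (le_antisymm ?_ ((Subgroup.closure_le H).mpr hgen))
  refine Subgroup.le_closure_of_exists_mul_lt cs.length hgen fun w ⟨hwK, hwΓ⟩ hw1 => ?_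
  rw [← Set.image_union] at hwK
  obtain ⟨i, hi | hi, hwi⟩ := cs.exists_isRightDescent_of_mem_closure hwK hw1
  · exact ⟨_, .inl rfl, huI.length_mul_lt_of_eq_orbit hΓ hIorb hwΓ hi hwi⟩
  · exact ⟨_, .inr rfl, huJ.length_mul_lt_of_eq_orbit hΓ hJorb hwΓ hi hwi⟩

/-- for distinct `I, J ∈ S̄` and `K = I ∪ J`, the group of `Γ`-fixed points of
`W_K` is generated by the two involutions `w_I` and `w_J`; in particular it is dihedral. -/
theorem fixedPoints_union_eq_dihedral {B W : Type*} [Finite B] [Group W] {M : CoxeterMatrix B}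
    (cs : CoxeterSystem M W) (Γ : Subgroup (MulAut W))
    (hΓ : ∀ γ ∈ Γ, ⇑γ '' Set.range cs.simple = Set.range cs.simple)
    (wI : Set W → W)
    (hwI : ∀ I : Set W, IsFinParabolicOrbit cs Γ I → IsLongestIn cs I (wI I))
    (I J : Set W) (hI : IsFinParabolicOrbit cs Γ I) (hJ : IsFinParabolicOrbit cs Γ J)
    (hIJ : I ≠ J) :
    wI I * wI I = 1 ∧ wI J * wI J = 1 ∧
      {w : W | w ∈ Subgroup.closure (I ∪ J) ∧ ∀ γ ∈ Γ, γ w = w} =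
        (Subgroup.closure {wI I, wI J} : Set W) :=
  fixedPoints_union_eq_dihedral_general cs Γ hΓ wI hwI I J hI hJ
end

section
/- Let I, J ∈ S̄ with I ≠ J, set K := I ∪ J, and assume W_K is finite. Let 2m be the order of the dihedral group W_K^Γ = ⟨w_I, w_J⟩. Then every y ∈ W_K^Γ satisfies l(y) ≤ (m/2)(l(w_I) + l(w_J)). -/
open CoxeterSystem

/-!
Write `a = w_I`, `b = w_J` and `n` for the order of `a * b`. Every element of `⟨a, b⟩` is
`(ab)^k` or `(ab)^k a` with `k < n`; since `(ab)^n = 1` it is also `(ba)^(n-k)`, resp.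
`(ba)^(n-k-1) b`. Subadditivity of the length applied to both expressions gives
`2 l(y) ≤ n (l(a) + l(b))`, and `n ≤ m` because `a ∉ ⟨ab⟩` makes `⟨ab⟩` a proper subgroup of the
group of order `2m`.

That a longest element `a` of a standard parabolic subgroup `W_I` is an involution is proved with
the reflection cocycle `η(w, t) ∈ ℤ/2` (Björner–Brenti), read off from an action of `W` on
`W × ℤ/2`: `η(w, t) = 1` iff `t` is a right inversion of `w`, `η(uv, t) = η(v, t) + η(u, v t v⁻¹)`,
and `η(w, ·)` is supported in `W_I` for `w ∈ W_I`. So the right inversions of `a` are exactly the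
reflections of `W_I`, a set stable under conjugation by `a`; hence `η(a², ·) = 0` and `a² = 1`.
-/

open Subgroup Set

theorem ZMod.eq_zero_or_eq_one : ∀ x : ZMod 2, x = 0 ∨ x = 1 := by decide

theorem Function.Periodic.sum_range_two_mul {R : Type*} [AddCommMonoid R] {f : ℕ → R} {c : ℕ}
    (hf : Function.Periodic f c) :
    ∑ l ∈ Finset.range (2 * c), f l = 2 • ∑ l ∈ Finset.range c, f l := by
  rw [two_mul, Finset.sum_range_add, two_nsmul]
  congr 1
  exact Finset.sum_congr rfl fun l _ ↦ by rw [add_comm]; exact hf l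

theorem mul_mul_inv_eq_iff_s8 {G : Type*} [Group G] {g x y : G} :
    g * x * g⁻¹ = y ↔ x = g⁻¹ * y * g := by
  constructor <;> rintro rfl <;> group

section DihedralLength

variable {G : Type*} [Group G] {a b : G}

theorem mul_mul_mem_zpowers_mul (ha : a * a = 1) (hb : b * b = 1) {x : G}
    (hx : x ∈ zpowers (a * b)) : a * x * a ∈ zpowers (a * b) := by
  obtain ⟨k, rfl⟩ := mem_zpowers_iff.mp hx
  have ha' : a⁻¹ = a := inv_eq_of_mul_eq_one_right ha
  have hconj : a * (a * b) * a⁻¹ = (a * b)⁻¹ := by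
    rw [mul_inv_rev, ha', inv_eq_of_mul_eq_one_right hb, ← mul_assoc, ha, one_mul]
  rw [show a * (a * b) ^ k * a = a * (a * b) ^ k * a⁻¹ by rw [ha'], ← conj_zpow, hconj]
  exact zpow_mem (inv_mem (mem_zpowers _)) k

theorem mem_zpowers_or_mul_mem_zpowers_of_mem_closure_pair (ha : a * a = 1) (hb : b * b = 1)
    {y : G} (hy : y ∈ closure {a, b}) : y ∈ zpowers (a * b) ∨ y * a ∈ zpowers (a * b) := by
  have hconj : ∀ x ∈ zpowers (a * b), a * x * a ∈ zpowers (a * b) :=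
    fun _ ↦ mul_mul_mem_zpowers_mul ha hb
  have haa : ∀ z, a * (a * z) = z := fun z ↦ by rw [← mul_assoc, ha, one_mul]
  induction hy using closure_induction with
  | mem x hx =>
    rcases hx with rfl | hx
    · exact .inr (ha ▸ one_mem _)
    · rw [Set.mem_singleton_iff.mp hx]
      refine .inr ?_
      convert hconj _ (mem_zpowers (a * b)) using 1
      rw [haa]
  | one => exact .inl (one_mem _)
  | mul x y _ _ hx hy =>
    rcases hx with hx | hx <;> rcases hy with hy | hy
    · exact .inl (mul_mem hx hy)
    · exact .inr (by simpa only [mul_assoc] using mul_mem hx hy)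
    · refine .inr ?_
      convert mul_mem hx (hconj y hy) using 1
      simp only [mul_assoc, haa]
    · refine .inl ?_
      convert mul_mem hx (hconj _ hy) using 1
      simp only [mul_assoc, haa, ha, mul_one]
  | inv x _ hx =>
    rcases hx with hx | hx
    · exact .inl (inv_mem hx)
    · refine .inr ?_
      convert hconj _ (inv_mem hx) using 1
      rw [mul_inv_rev, inv_eq_of_mul_eq_one_right ha, haa]

theorem notMem_zpowers_mul (ha : a * a = 1) (hb : b * b = 1) (ha1 : a ≠ 1) (hb1 : b ≠ 1) :
    a ∉ zpowers (a * b) := by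
  intro hmem
  obtain ⟨k, hk⟩ := mem_zpowers_iff.mp hmem
  have hcomm : Commute ((a * b) ^ k) (a * b) := Commute.zpow_self _ _
  rw [hk] at hcomm
  have hba : b * a = a * b :=
    calc b * a = a * (a * b) * a := by rw [← mul_assoc, ha, one_mul]
      _ = a * b * a * a := by rw [hcomm.eq]
      _ = a * b := by simp only [mul_assoc, ha, mul_one]
  have hsq : (a * b) ^ (2 : ℤ) = 1 := by
    rw [zpow_two, mul_assoc, ← mul_assoc b, hba, mul_assoc, hb, mul_one, ha]
  rw [zpow_eq_zpow_emod k hsq] at hk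
  rcases Int.emod_two_eq_zero_or_one k with h | h <;> rw [h] at hk
  · exact ha1 (by simpa using hk.symm)
  · exact hb1 (by simpa using hk)

theorem orderOf_mul_le_of_card_closure_pair (ha : a * a = 1) (hb : b * b = 1) (ha1 : a ≠ 1)
    (hb1 : b ≠ 1) [Finite (closure {a, b})] {m : ℕ} (hm : Nat.card (closure {a, b}) = 2 * m) :
    orderOf (a * b) ≤ m := by
  have hle : zpowers (a * b) ≤ closure {a, b} :=
    zpowers_le.mpr (mul_mem (subset_closure (by simp)) (subset_closure (by simp)))
  have hdvd : orderOf (a * b) ∣ 2 * m := Nat.card_zpowers (a * b) ▸ hm ▸ card_dvd_of_le hle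
  have hne : orderOf (a * b) ≠ 2 * m := by
    intro h
    have heq := eq_of_le_of_card_ge hle (by rw [hm, Nat.card_zpowers, h])
    exact notMem_zpowers_mul ha hb ha1 hb1 (heq ▸ subset_closure (by simp))
  have hpos : 0 < 2 * m := hm ▸ Nat.card_pos
  obtain ⟨d, hd⟩ := hdvd
  rcases d with _ | _ | d
  · omega
  · omega
  · nlinarith

theorem mul_pow_sub_eq_pow (ha : a * a = 1) (hb : b * b = 1) {n k : ℕ} (hn : (a * b) ^ n = 1)
    (hk : k ≤ n) : (b * a) ^ (n - k) = (a * b) ^ k := by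
  have hba : b * a = (a * b)⁻¹ := by
    rw [mul_inv_rev, inv_eq_of_mul_eq_one_right ha, inv_eq_of_mul_eq_one_right hb]
  rw [hba, inv_pow, pow_sub _ hk, hn, one_mul, inv_inv]

section Subadditive

variable (ℓ : G → ℕ)

theorem apply_pow_le_of_subadditive (h_one : ℓ 1 = 0) (h_mul : ∀ x y, ℓ (x * y) ≤ ℓ x + ℓ y)
    (x : G) (k : ℕ) : ℓ (x ^ k) ≤ k * ℓ x := by
  induction k with
  | zero => simp [h_one]
  | succ k ih =>
    calc ℓ (x ^ (k + 1)) ≤ ℓ (x ^ k) + ℓ x := pow_succ x k ▸ h_mul _ _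
      _ ≤ (k + 1) * ℓ x := by rw [add_mul, one_mul]; gcongr

theorem two_mul_apply_pow_le (h_one : ℓ 1 = 0) (h_mul : ∀ x y, ℓ (x * y) ≤ ℓ x + ℓ y)
    (ha : a * a = 1) (hb : b * b = 1) {n k : ℕ} (hn : (a * b) ^ n = 1) (hk : k ≤ n) :
    2 * ℓ ((a * b) ^ k) ≤ n * (ℓ a + ℓ b) := by
  have hpow := apply_pow_le_of_subadditive ℓ h_one h_mul
  have h₁ : ℓ ((a * b) ^ k) ≤ k * (ℓ a + ℓ b) :=
    (hpow _ k).trans (Nat.mul_le_mul_left k (h_mul a b))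
  have h₂ : ℓ ((a * b) ^ k) ≤ (n - k) * (ℓ a + ℓ b) := by
    rw [← mul_pow_sub_eq_pow ha hb hn hk, add_comm (ℓ a)]
    exact (hpow _ _).trans (Nat.mul_le_mul_left _ (h_mul b a))
  calc 2 * ℓ ((a * b) ^ k) ≤ k * (ℓ a + ℓ b) + (n - k) * (ℓ a + ℓ b) := by omega
    _ = n * (ℓ a + ℓ b) := by rw [← add_mul, Nat.add_sub_cancel' hk]

theorem two_mul_apply_pow_mul_le (h_one : ℓ 1 = 0) (h_mul : ∀ x y, ℓ (x * y) ≤ ℓ x + ℓ y)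
    (ha : a * a = 1) (hb : b * b = 1) {n k : ℕ} (hn : (a * b) ^ n = 1) (hk : k < n) :
    2 * ℓ ((a * b) ^ k * a) ≤ n * (ℓ a + ℓ b) := by
  have hpow := apply_pow_le_of_subadditive ℓ h_one h_mul
  have h₁ : ℓ ((a * b) ^ k * a) ≤ k * (ℓ a + ℓ b) + ℓ a :=
    (h_mul _ _).trans <| Nat.add_le_add_right
      ((hpow _ k).trans (Nat.mul_le_mul_left k (h_mul a b))) _
  have h₂ : ℓ ((a * b) ^ k * a) ≤ (n - k - 1) * (ℓ a + ℓ b) + ℓ b := by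
    have hrev : (a * b) ^ k * a = (b * a) ^ (n - k - 1) * b :=
      calc (a * b) ^ k * a = (b * a) ^ (n - k) * a := by rw [mul_pow_sub_eq_pow ha hb hn hk.le]
        _ = (b * a) ^ (n - k - 1) * (b * a) * a := by
          rw [← pow_succ, Nat.sub_add_cancel (by omega : 1 ≤ n - k)]
        _ = (b * a) ^ (n - k - 1) * b := by rw [mul_assoc, mul_assoc, ha, mul_one]
    rw [hrev, add_comm (ℓ a)]
    exact (h_mul _ _).trans <| Nat.add_le_add_right
      ((hpow _ _).trans (Nat.mul_le_mul_left _ (h_mul b a))) _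
  calc 2 * ℓ ((a * b) ^ k * a)
      ≤ k * (ℓ a + ℓ b) + ℓ a + ((n - k - 1) * (ℓ a + ℓ b) + ℓ b) := by omega
    _ = (k + 1 + (n - k - 1)) * (ℓ a + ℓ b) := by ring
    _ = n * (ℓ a + ℓ b) := by rw [show k + 1 + (n - k - 1) = n by omega]

theorem two_mul_apply_le_of_mem_closure_pair (h_one : ℓ 1 = 0)
    (h_mul : ∀ x y, ℓ (x * y) ≤ ℓ x + ℓ y) (ha : a * a = 1) (hb : b * b = 1) (ha1 : a ≠ 1)
    (hb1 : b ≠ 1) [Finite (closure {a, b})] {m : ℕ} (hm : Nat.card (closure {a, b}) = 2 * m)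
    {y : G} (hy : y ∈ closure {a, b}) : 2 * ℓ y ≤ m * (ℓ a + ℓ b) := by
  have hr : a * b ∈ closure {a, b} :=
    mul_mem (subset_closure (by simp)) (subset_closure (by simp))
  have hfin : IsOfFinOrder (a * b) :=
    Submonoid.isOfFinOrder_coe.mpr (isOfFinOrder_of_finite (⟨a * b, hr⟩ : closure {a, b}))
  have hpow : ∀ x ∈ zpowers (a * b), ∃ k < orderOf (a * b), (a * b) ^ k = x := fun x hx ↦ by
    obtain ⟨k, rfl⟩ := (Submonoid.mem_powers_iff _ _).mp (hfin.mem_powers_iff_mem_zpowers.mpr hx)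
    exact ⟨k % orderOf (a * b), Nat.mod_lt _ hfin.orderOf_pos, pow_mod_orderOf _ _⟩
  refine le_trans ?_ <|
    Nat.mul_le_mul_right _ (orderOf_mul_le_of_card_closure_pair ha hb ha1 hb1 hm)
  rcases mem_zpowers_or_mul_mem_zpowers_of_mem_closure_pair ha hb hy with hy | hy
  · obtain ⟨k, hk, rfl⟩ := hpow y hy
    exact two_mul_apply_pow_le ℓ h_one h_mul ha hb (pow_orderOf_eq_one _) hk.le
  · obtain ⟨k, hk, hyk⟩ := hpow _ hy
    rw [eq_mul_inv_of_mul_eq hyk.symm, inv_eq_of_mul_eq_one_right ha]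
    exact two_mul_apply_pow_mul_le ℓ h_one h_mul ha hb (pow_orderOf_eq_one _) hk

end Subadditive

end DihedralLength

namespace CoxeterSystem

open scoped Classical

variable {B W : Type*} [Group W] {M : CoxeterMatrix B} (cs : CoxeterSystem M W)

local prefix:100 "s" => cs.simple
local prefix:100 "ℓ" => cs.length

noncomputable def simpleReflPerm (i : B) : Equiv.Perm (W × ZMod 2) :=
  Function.Involutive.toPerm (fun p ↦ (s i * p.1 * s i, p.2 + if p.1 = s i then 1 else 0)) <| by
    rintro ⟨t, ε⟩
    have hconj : s i * t * s i = s i ↔ t = s i := by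
      rw [mul_assoc, mul_eq_left, mul_eq_one_iff_eq_inv, inv_simple]
    refine Prod.ext ?_ ?_
    · simp only [mul_assoc, simple_mul_simple_self, mul_one, simple_mul_simple_cancel_left]
    · simp only [hconj, add_assoc, CharTwo.add_self_eq_zero, add_zero]

@[simp]
theorem simpleReflPerm_apply (i : B) (t : W) (ε : ZMod 2) :
    cs.simpleReflPerm i (t, ε) = (s i * t * s i, ε + if t = s i then 1 else 0) :=
  rfl

theorem inv_pow_mul_simple (i j : B) (k : ℕ) :
    ((s i * s j) ^ k)⁻¹ * s j = s j * (s i * s j) ^ k := by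
  have hsemi : SemiconjBy (s j) (s i * s j) (s j * s i) := by
    simp only [SemiconjBy, mul_assoc]
  have hinv : (s i * s j)⁻¹ = s j * s i := by simp only [mul_inv_rev, inv_simple]
  rw [(hsemi.pow_right k).eq, ← hinv, inv_pow]

theorem simpleReflPerm_mul_pow_apply (i j : B) (k : ℕ) (t : W) (ε : ZMod 2) :
    ((cs.simpleReflPerm i * cs.simpleReflPerm j) ^ k) (t, ε) =
      ((s i * s j) ^ k * t * ((s i * s j) ^ k)⁻¹,
        ε + ∑ l ∈ Finset.range (2 * k), if t = s j * (s i * s j) ^ l then 1 else 0) := by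
  induction k with
  | zero => simp
  | succ k ih =>
    set r := s i * s j
    have h₁ : r ^ k * t * (r ^ k)⁻¹ = s j ↔ t = s j * r ^ (2 * k) := by
      rw [mul_mul_inv_eq_iff_s8, cs.inv_pow_mul_simple, mul_assoc, ← pow_add, two_mul]
    have h₂ : s j * (r ^ k * t * (r ^ k)⁻¹) * s j = s i ↔ t = s j * r ^ (2 * k + 1) := by
      have hconj : (r ^ k)⁻¹ * (s j * s i * s j) * r ^ k = s j * r ^ (2 * k + 1) := by
        rw [mul_assoc (s j), ← mul_assoc, cs.inv_pow_mul_simple, mul_assoc, mul_assoc,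
          ← pow_succ', ← pow_add, two_mul, add_assoc]
      simpa only [inv_simple, mul_mul_inv_eq_iff_s8, hconj] using
        mul_mul_inv_eq_iff_s8 (g := s j) (x := r ^ k * t * (r ^ k)⁻¹) (y := s i)
    rw [pow_succ', Equiv.Perm.mul_apply, ih, Equiv.Perm.mul_apply, simpleReflPerm_apply,
      simpleReflPerm_apply, h₁, h₂, mul_add_one 2 k, Finset.sum_range_succ, Finset.sum_range_succ]
    refine Prod.ext ?_ ?_
    · simp only [r, pow_succ', mul_inv_rev, inv_simple, mul_assoc]
    · simp only [add_assoc]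

theorem isLiftable_simpleReflPerm : M.IsLiftable cs.simpleReflPerm := by
  intro i j
  ext ⟨t, ε⟩ : 1
  -- `(s i * s j) ^ M i j = 1`, so each reflection `s j * (s i * s j) ^ l` is counted twice.
  have hper : Function.Periodic
      (fun l ↦ if t = s j * (s i * s j) ^ l then (1 : ZMod 2) else 0) (M i j) := fun l ↦ by
    simp only [pow_add, simple_mul_simple_pow, mul_one]
  rw [simpleReflPerm_mul_pow_apply, simple_mul_simple_pow, hper.sum_range_two_mul, two_nsmul,
    CharTwo.add_self_eq_zero]
  simp

noncomputable def reflPerm : W →* Equiv.Perm (W × ZMod 2) :=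
  cs.lift ⟨cs.simpleReflPerm, cs.isLiftable_simpleReflPerm⟩

theorem reflPerm_simple (i : B) : cs.reflPerm (s i) = cs.simpleReflPerm i :=
  cs.lift_apply_simple cs.isLiftable_simpleReflPerm i

noncomputable def inversionParity (w t : W) : ZMod 2 := (cs.reflPerm w (t, 0)).2

theorem reflPerm_apply (w t : W) (ε : ZMod 2) :
    cs.reflPerm w (t, ε) = (w * t * w⁻¹, ε + cs.inversionParity w t) := by
  induction w using cs.simple_induction_left generalizing t ε with
  | one => simp [inversionParity]
  | mul_simple_left w i ih =>
    rw [inversionParity, map_mul, Equiv.Perm.mul_apply, Equiv.Perm.mul_apply, ih, ih,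
      reflPerm_simple, simpleReflPerm_apply, simpleReflPerm_apply]
    refine Prod.ext ?_ ?_
    · simp only [mul_inv_rev, inv_simple, mul_assoc]
    · simp only [zero_add, add_assoc]

theorem inversionParity_one (t : W) : cs.inversionParity 1 t = 0 := by
  simp [inversionParity]

theorem inversionParity_simple (i : B) (t : W) :
    cs.inversionParity (s i) t = if t = s i then 1 else 0 := by
  simp [inversionParity, reflPerm_simple]

theorem inversionParity_mul (u v t : W) :
    cs.inversionParity (u * v) t =
      cs.inversionParity v t + cs.inversionParity u (v * t * v⁻¹) := by
  rw [inversionParity, map_mul, Equiv.Perm.mul_apply, reflPerm_apply, reflPerm_apply, zero_add]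

theorem inversionParity_inv (u t : W) :
    cs.inversionParity u⁻¹ t = cs.inversionParity u (u⁻¹ * t * u) := by
  have h := cs.inversionParity_mul u u⁻¹ t
  rwa [mul_inv_cancel, inversionParity_one, inv_inv, eq_comm, CharTwo.add_eq_zero] at h

theorem inversionParity_self {t : W} (ht : cs.IsReflection t) : cs.inversionParity t t = 1 := by
  obtain ⟨u, i, rfl⟩ := ht
  calc cs.inversionParity (u * s i * u⁻¹) (u * s i * u⁻¹)
      = cs.inversionParity u (s i) +
          (cs.inversionParity (s i) (s i) + cs.inversionParity u (s i)) := by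
        have hconj : u⁻¹ * (u * s i * u⁻¹) * u = s i := by group
        rw [inversionParity_mul, inversionParity_inv, inv_inv, hconj, inversionParity_mul,
          mul_inv_cancel_right]
    _ = 1 := by
      rw [inversionParity_simple, if_pos rfl, add_left_comm, CharTwo.add_self_eq_zero, add_zero]

theorem isRightInversion_of_inversionParity_eq_one {w t : W} (h : cs.inversionParity w t = 1) :
    cs.IsRightInversion w t := by
  induction hn : ℓ w using Nat.strong_induction_on generalizing w t with
  | _ n ih =>
    rcases eq_or_ne w 1 with rfl | hw
    · simp [inversionParity_one] at h
    obtain ⟨i, hi⟩ := cs.exists_rightDescent_of_ne_one hw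
    by_cases hti : t = s i
    · exact hti ▸ ⟨cs.isReflection_simple i, hi⟩
    have hsplit : cs.inversionParity w t =
        cs.inversionParity (s i) t + cs.inversionParity (w * s i) (s i * t * s i) := by
      conv_lhs => rw [← cs.simple_mul_simple_cancel_right (w := w) i]
      rw [inversionParity_mul, inv_simple]
    rw [hsplit, inversionParity_simple, if_neg hti, zero_add] at h
    obtain ⟨hrefl, hlt⟩ := ih _ (hn ▸ hi) h rfl
    refine ⟨(cs.isReflection_conj_iff (s i) t).mp (by rwa [inv_simple]), ?_⟩
    have hle : ℓ (w * t) ≤ ℓ (w * t * s i) + 1 := by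
      simpa only [simple_mul_simple_cancel_right, length_simple] using
        cs.length_mul_le (w * t * s i) (s i)
    have hi' : ℓ (w * s i) < ℓ w := hi
    simp only [← mul_assoc, simple_mul_simple_cancel_right] at hlt
    omega

theorem inversionParity_eq_one_iff {w t : W} :
    cs.inversionParity w t = 1 ↔ cs.IsRightInversion w t := by
  refine ⟨cs.isRightInversion_of_inversionParity_eq_one, fun h ↦ ?_⟩
  refine (ZMod.eq_zero_or_eq_one _).resolve_left fun h0 ↦ ?_
  have hwt : cs.inversionParity (w * t) t = 1 := by
    rw [inversionParity_mul, inversionParity_self cs h.1, mul_inv_cancel_right, h0, add_zero]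
  have := (cs.isRightInversion_of_inversionParity_eq_one hwt).2
  rw [mul_assoc, h.1.mul_self, mul_one] at this
  exact lt_asymm this h.2

theorem inversionParity_eq_ite (w t : W) :
    cs.inversionParity w t = if cs.IsRightInversion w t then 1 else 0 := by
  rw [← inversionParity_eq_one_iff]
  rcases ZMod.eq_zero_or_eq_one (cs.inversionParity w t) with h | h <;> simp [h]

theorem mem_closure_of_inversionParity_eq_one {I : Set W} (hI : I ⊆ range cs.simple) {w t : W}
    (hw : w ∈ closure I) (h : cs.inversionParity w t = 1) : t ∈ closure I := by
  induction hw using closure_induction generalizing t with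
  | mem x hx =>
    obtain ⟨i, rfl⟩ := hI hx
    rw [inversionParity_simple] at h
    split_ifs at h with hti
    · exact hti ▸ subset_closure hx
    · exact absurd h zero_ne_one
  | one => simp [inversionParity_one] at h
  | mul u v _ hv ihu ihv =>
    rw [inversionParity_mul] at h
    rcases ZMod.eq_zero_or_eq_one (cs.inversionParity v t) with hv' | hv'
    · rw [hv', zero_add] at h
      simpa [mul_assoc] using mul_mem (mul_mem (inv_mem hv) (ihu h)) hv
    · exact ihv hv'
  | inv u hu ihu =>
    rw [inversionParity_inv] at h
    simpa [mul_assoc] using mul_mem (mul_mem hu (ihu h)) (inv_mem hu)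

end CoxeterSystem

section LongestElement

variable {B W : Type*} [Group W] {M : CoxeterMatrix B} {cs : CoxeterSystem M W} {I : Set W}
  {a : W}

theorem IsLongestIn.isRightInversion_iff (hI : I ⊆ range cs.simple) (ha : IsLongestIn cs I a)
    (t : W) : cs.IsRightInversion a t ↔ cs.IsReflection t ∧ t ∈ closure I := by
  refine ⟨fun h ↦ ⟨h.1, cs.mem_closure_of_inversionParity_eq_one hI ha.1
    (cs.inversionParity_eq_one_iff.mpr h)⟩, fun ⟨hrefl, hmem⟩ ↦ ⟨hrefl, ?_⟩⟩
  exact lt_of_le_of_ne (ha.2 _ (mul_mem ha.1 hmem)) (hrefl.length_mul_left_ne a)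

theorem IsLongestIn.mul_self_s8 (hI : I ⊆ range cs.simple) (ha : IsLongestIn cs I a) :
    a * a = 1 := by
  by_contra hne
  obtain ⟨i, hi⟩ := cs.exists_rightDescent_of_ne_one hne
  have hconj : ∀ t, cs.inversionParity a t = cs.inversionParity a (a * t * a⁻¹) := fun t ↦ by
    rw [cs.inversionParity_eq_ite, cs.inversionParity_eq_ite]
    congr 1
    simp only [ha.isRightInversion_iff hI, cs.isReflection_conj_iff,
      mul_mem_cancel_right (inv_mem ha.1), mul_mem_cancel_left ha.1]
  have h := cs.inversionParity_eq_one_iff.mpr ⟨cs.isReflection_simple i, hi⟩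
  rw [cs.inversionParity_mul, ← hconj, CharTwo.add_self_eq_zero] at h
  exact zero_ne_one h

theorem IsLongestIn.ne_one (hI : I ⊆ range cs.simple) (hne : I.Nonempty)
    (ha : IsLongestIn cs I a) : a ≠ 1 := by
  rintro rfl
  obtain ⟨x, hx⟩ := hne
  obtain ⟨i, rfl⟩ := hI hx
  simpa using ha.2 _ (subset_closure hx)

end LongestElement

section Orbit

variable {B W : Type*} [Group W] {M : CoxeterMatrix B} {cs : CoxeterSystem M W}
  {Γ : Subgroup (MulAut W)} {I : Set W}

theorem IsFinParabolicOrbit.subset_range_simple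
    (hΓ : ∀ γ ∈ Γ, ⇑γ '' range cs.simple = range cs.simple) (hI : IsFinParabolicOrbit cs Γ I) :
    I ⊆ range cs.simple := by
  obtain ⟨⟨x, hx, rfl⟩, -⟩ := hI
  rintro _ ⟨γ, hγ, rfl⟩
  rw [← hΓ γ hγ]
  exact mem_image_of_mem γ hx

theorem IsFinParabolicOrbit.nonempty (hI : IsFinParabolicOrbit cs Γ I) : I.Nonempty := by
  obtain ⟨⟨x, -, rfl⟩, -⟩ := hI
  exact ⟨x, 1, Γ.one_mem, rfl⟩

end Orbit

theorem length_le_of_mem_fixedPoints_union_general {B W : Type*} [Group W]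
    {M : CoxeterMatrix B}
    (cs : CoxeterSystem M W) (Γ : Subgroup (MulAut W))
    (hΓ : ∀ γ ∈ Γ, ⇑γ '' Set.range cs.simple = Set.range cs.simple)
    (wI : Set W → W)
    (hwI : ∀ I : Set W, IsFinParabolicOrbit cs Γ I → IsLongestIn cs I (wI I))
    (I J : Set W) (hI : IsFinParabolicOrbit cs Γ I) (hJ : IsFinParabolicOrbit cs Γ J)
    (hK : Finite ↥(Subgroup.closure (I ∪ J)))
    (m : ℕ)
    (hm : Nat.card {w : W | w ∈ Subgroup.closure (I ∪ J) ∧ ∀ γ ∈ Γ, γ w = w} = 2 * m)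
    (hdih : {w : W | w ∈ Subgroup.closure (I ∪ J) ∧ ∀ γ ∈ Γ, γ w = w} =
      (Subgroup.closure {wI I, wI J} : Set W))
    (y : W) (hy : y ∈ Subgroup.closure (I ∪ J)) (hyfix : ∀ γ ∈ Γ, γ y = y) :
    2 * cs.length y ≤ m * (cs.length (wI I) + cs.length (wI J)) := by
  have hfix : ∀ x, x ∈ closure {wI I, wI J} ↔ x ∈ closure (I ∪ J) ∧ ∀ γ ∈ Γ, γ x = x :=
    fun x ↦ (Set.ext_iff.mp hdih x).symm
  have hle : closure {wI I, wI J} ≤ closure (I ∪ J) := fun x hx ↦ ((hfix x).mp hx).1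
  have : Finite (closure {wI I, wI J}) := Finite.of_injective _ (Subgroup.inclusion_injective hle)
  have hcard : Nat.card (closure {wI I, wI J}) = 2 * m := by rw [← hm, hdih]; rfl
  have hIs := hI.subset_range_simple hΓ
  have hJs := hJ.subset_range_simple hΓ
  exact two_mul_apply_le_of_mem_closure_pair cs.length cs.length_one cs.length_mul_le
    ((hwI I hI).mul_self_s8 hIs) ((hwI J hJ).mul_self_s8 hJs) ((hwI I hI).ne_one hIs hI.nonempty)
    ((hwI J hJ).ne_one hJs hJ.nonempty) hcard ((hfix y).mpr ⟨hy, hyfix⟩)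

/-- with `K = I ∪ J` (`I ≠ J` in `S̄`), `W_K` finite and `|W_K^Γ| = 2m`,
every `y ∈ W_K^Γ` satisfies `l(y) ≤ (m/2)(l(w_I) + l(w_J))`. -/
theorem length_le_of_mem_fixedPoints_union {B W : Type*} [Finite B] [Group W]
    {M : CoxeterMatrix B}
    (cs : CoxeterSystem M W) (Γ : Subgroup (MulAut W))
    (hΓ : ∀ γ ∈ Γ, ⇑γ '' Set.range cs.simple = Set.range cs.simple)
    (wI : Set W → W)
    (hwI : ∀ I : Set W, IsFinParabolicOrbit cs Γ I → IsLongestIn cs I (wI I))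
    (I J : Set W) (hI : IsFinParabolicOrbit cs Γ I) (hJ : IsFinParabolicOrbit cs Γ J)
    (hIJ : I ≠ J) (hK : Finite ↥(Subgroup.closure (I ∪ J)))
    (m : ℕ)
    (hm : Nat.card {w : W | w ∈ Subgroup.closure (I ∪ J) ∧ ∀ γ ∈ Γ, γ w = w} = 2 * m)
    (hdih : {w : W | w ∈ Subgroup.closure (I ∪ J) ∧ ∀ γ ∈ Γ, γ w = w} =
      (Subgroup.closure {wI I, wI J} : Set W))
    (y : W) (hy : y ∈ Subgroup.closure (I ∪ J)) (hyfix : ∀ γ ∈ Γ, γ y = y) :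
    2 * cs.length y ≤ m * (cs.length (wI I) + cs.length (wI J)) :=
  length_le_of_mem_fixedPoints_union_general cs Γ hΓ wI hwI I J hI hJ hK m hm hdih y hy hyfix
end
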